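/- arXiv:1808.02084 — 3 statements merged into one kernel-verified Lean document; each statement's English description precedes it below -/
import Mathlib

section
/- Fix z ∈ ℝ and h > 0. Let φ(x) = (2π)^{-1/2} exp(-x²/2) be the standard normal density and k(x) = exp(-(x - z)²/h) the Gaussian kernel centered at z. Then the function x ↦ (d/dx)(k(x)·φ(x)) is integrable on ℝ and ∫_ℝ (d/dx)(k(x)·φ(x)) dx = 0; that is, the Gaussian kernel x ↦ exp(-(x-z)²/h) is in the Stein class of the standard normal distribution. -/
/-!
The product of the kernel with the normal density `φ` is integrable, and so is its derivative
`k' φ - x k φ`: the kernel is bounded and its derivative grows at most linearly, while `φ` has a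
finite first absolute moment. A differentiable integrable function with integrable derivative
vanishes at `±∞`, so the derivative integrates to zero.
-/

open MeasureTheory Real

noncomputable section

def stdNormalDensity (x : ℝ) : ℝ := (2 * π) ^ (-(1 : ℝ) / 2) * exp (-x ^ 2 / 2)

def InSteinClass (f p : ℝ → ℝ) : Prop :=
  Integrable (deriv fun x => f x * p x) ∧ ∫ x, deriv (fun x => f x * p x) x = 0

end

lemma stdNormalDensity_nonneg (x : ℝ) : 0 ≤ stdNormalDensity x := by
  unfold stdNormalDensity; positivity

lemma hasDerivAt_stdNormalDensity (x : ℝ) :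
    HasDerivAt stdNormalDensity (-x * stdNormalDensity x) x := by
  have hsq : HasDerivAt (fun x : ℝ => -x ^ 2 / 2) (-x) x :=
    ((hasDerivAt_pow 2 x).neg.div_const 2).congr_deriv (by ring)
  exact (hsq.exp.const_mul ((2 * π) ^ (-(1 : ℝ) / 2))).congr_deriv
    (by rw [stdNormalDensity]; ring)

lemma stdNormalDensity_eq_mul_exp_neg_mul_sq (x : ℝ) :
    stdNormalDensity x = (2 * π) ^ (-(1 : ℝ) / 2) * exp (-(1 / 2) * x ^ 2) := by
  unfold stdNormalDensity; ring_nf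

lemma integrable_stdNormalDensity : Integrable stdNormalDensity := by
  refine ((integrable_exp_neg_mul_sq (b := 1 / 2) (by norm_num)).const_mul
    ((2 * π) ^ (-(1 : ℝ) / 2))).congr
      (.of_forall fun x => (stdNormalDensity_eq_mul_exp_neg_mul_sq x).symm)

lemma integrable_mul_stdNormalDensity : Integrable fun x => x * stdNormalDensity x := by
  refine ((integrable_mul_exp_neg_mul_sq (b := 1 / 2) (by norm_num)).const_mul
    ((2 * π) ^ (-(1 : ℝ) / 2))).congr (.of_forall fun x => ?_)
  simp only [stdNormalDensity_eq_mul_exp_neg_mul_sq, mul_left_comm]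

lemma integrable_one_add_abs_mul_stdNormalDensity :
    Integrable fun x => (1 + |x|) * stdNormalDensity x := by
  refine (integrable_stdNormalDensity.add integrable_mul_stdNormalDensity.abs).congr
    (.of_forall fun x => ?_)
  simp only [Pi.add_apply, abs_mul, abs_of_nonneg (stdNormalDensity_nonneg x)]
  ring

theorem inSteinClass_stdNormalDensity {k k' : ℝ → ℝ} {B C : ℝ}
    (hk : ∀ x, HasDerivAt k (k' x) x) (hk_le : ∀ x, |k x| ≤ B)
    (hk'_le : ∀ x, |k' x| ≤ C * (1 + |x|)) :
    InSteinClass k stdNormalDensity := by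
  have hderiv (x : ℝ) : HasDerivAt (fun x => k x * stdNormalDensity x)
      (k' x * stdNormalDensity x + k x * (-x * stdNormalDensity x)) x :=
    (hk x).mul (hasDerivAt_stdNormalDensity x)
  have hk_meas : AEStronglyMeasurable k :=
    (continuous_iff_continuousAt.2 fun x => (hk x).continuousAt).aestronglyMeasurable
  have hk'_meas : AEStronglyMeasurable k' := by
    rw [show k' = deriv k from funext fun x => (hk x).deriv.symm]
    exact (measurable_deriv k).aestronglyMeasurable
  have hk'φ : Integrable fun x => k' x * stdNormalDensity x := by
    refine (integrable_one_add_abs_mul_stdNormalDensity.const_mul C).mono'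
      (hk'_meas.mul integrable_stdNormalDensity.aestronglyMeasurable) (.of_forall fun x => ?_)
    rw [norm_mul, norm_of_nonneg (stdNormalDensity_nonneg x), ← mul_assoc]
    exact mul_le_mul_of_nonneg_right (hk'_le x) (stdNormalDensity_nonneg x)
  have hkxφ : Integrable fun x => k x * (-x * stdNormalDensity x) :=
    (integrable_mul_stdNormalDensity.neg.congr (.of_forall fun x => (neg_mul x _).symm)).bdd_mul
      hk_meas (.of_forall hk_le)
  have hderiv_int := hk'φ.add hkxφ
  rw [InSteinClass, show (deriv fun x => k x * stdNormalDensity x) = _ from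
    funext fun x => (hderiv x).deriv]
  exact ⟨hderiv_int, integral_eq_zero_of_hasDerivAt_of_integrable hderiv hderiv_int
    (integrable_stdNormalDensity.bdd_mul hk_meas (.of_forall hk_le))⟩

lemma hasDerivAt_gaussianKernel (z h x : ℝ) :
    HasDerivAt (fun x => exp (-(x - z) ^ 2 / h)) (-2 * (x - z) / h * exp (-(x - z) ^ 2 / h)) x := by
  have hsq : HasDerivAt (fun x : ℝ => -(x - z) ^ 2 / h) (-2 * (x - z) / h) x := by
    simpa using (((hasDerivAt_id x).sub_const z).pow 2).neg.div_const h
  simpa [mul_comm] using hsq.exp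

lemma abs_gaussianKernel_le_one {h : ℝ} (hh : 0 ≤ h) (z x : ℝ) : |exp (-(x - z) ^ 2 / h)| ≤ 1 := by
  rw [abs_of_pos (exp_pos _), exp_le_one_iff]
  exact div_nonpos_of_nonpos_of_nonneg (neg_nonpos.2 (sq_nonneg _)) hh

lemma abs_deriv_gaussianKernel_le {h : ℝ} (hh : 0 < h) (z x : ℝ) :
    |-2 * (x - z) / h * exp (-(x - z) ^ 2 / h)| ≤ 2 * (1 + |z|) / h * (1 + |x|) :=
  calc |-2 * (x - z) / h * exp (-(x - z) ^ 2 / h)| ≤ 2 * (|x| + |z|) / h * 1 := by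
        rw [abs_mul, abs_div, abs_mul, abs_of_pos hh]
        gcongr
        · norm_num
        · exact abs_sub _ _
        · exact abs_gaussianKernel_le_one hh.le z x
    _ ≤ 2 * (1 + |z|) / h * (1 + |x|) := by
        rw [mul_one, div_mul_eq_mul_div]
        exact div_le_div_of_nonneg_right (by nlinarith [abs_nonneg x, abs_nonneg z]) hh.le

/-- The Gaussian kernel `x ↦ exp(-(x-z)²/h)` is in the Stein class of the
standard normal distribution: the derivative of the product of the kernel with
the standard normal density `φ(x) = (2π)^{-1/2} exp(-x²/2)` is integrable on `ℝ`
and has vanishing integral. -/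
theorem gaussian_kernel_in_stein_class_of_normal (z : ℝ) (h : ℝ) (hh : 0 < h) :
    Integrable
      (deriv (fun x : ℝ =>
        Real.exp (-(x - z) ^ 2 / h) * ((2 * Real.pi) ^ (-(1 : ℝ) / 2) * Real.exp (-x ^ 2 / 2))))
      (volume : Measure ℝ) ∧
    ∫ x : ℝ,
      deriv (fun x : ℝ =>
        Real.exp (-(x - z) ^ 2 / h) * ((2 * Real.pi) ^ (-(1 : ℝ) / 2) * Real.exp (-x ^ 2 / 2))) x
      = 0 :=
  inSteinClass_stdNormalDensity (hasDerivAt_gaussianKernel z h)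
    (abs_gaussianKernel_le_one hh.le z) (abs_deriv_gaussianKernel_le hh z)
end

section
/- Let p, q : ℝᵈ → ℝ be differentiable probability densities with p(x) > 0 and q(x) > 0 for all x, and fix x̄ ∈ ℝᵈ. Let k(·, x̄) : ℝᵈ → ℝ be differentiable, and assume each partial derivative x ↦ ∂ᵢ(k(x, x̄) q(x)) is integrable with ∫_{ℝᵈ} ∇_x(k(x, x̄) q(x)) dx = 0, and that the relevant integrands below are integrable. Then E_{x∼q}[A_p k(x, x̄)] = ∫_{ℝᵈ} ((∇ log p)(x) k(x, x̄) + ∇_x k(x, x̄)) q(x) dx = ∫_{ℝᵈ} ((∇ log p)(x) − (∇ log q)(x)) k(x, x̄) q(x) dx, as an identity of vectors in ℝᵈ. -/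
/-! Since `∇ log q = q⁻¹ • ∇q`, the product rule gives, pointwise, that the difference of the
two integrands is `∇(k(·, x̄) q)`; the score `∇ log p` cancels. The integral of that gradient
vanishes coordinatewise because `k(·, x̄)` is in the Stein class of `q`. -/

open MeasureTheory

section GradientCalculus

variable {F : Type*} [NormedAddCommGroup F] [InnerProductSpace ℝ F] [CompleteSpace F]
  {f g : F → ℝ} {x : F}

theorem gradient_fun_mul (hf : DifferentiableAt ℝ f x) (hg : DifferentiableAt ℝ g x) :
    gradient (fun y => f y * g y) x = f x • gradient g x + g x • gradient f x := by
  rw [gradient, fderiv_fun_mul hf hg, map_add, map_smul, map_smul, gradient, gradient]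

theorem gradient_log_comp (hf : DifferentiableAt ℝ f x) (hfx : f x ≠ 0) :
    gradient (fun y => Real.log (f y)) x = (f x)⁻¹ • gradient f x := by
  have hlog : HasFDerivAt (fun y => Real.log (f y)) ((f x)⁻¹ • fderiv ℝ f x) x :=
    (Real.hasDerivAt_log hfx).comp_hasFDerivAt x hf.hasFDerivAt
  rw [gradient, hlog.fderiv, map_smul, gradient]

theorem gradient_mul_eq_smul_stein_sub_smul_score_sub (hf : DifferentiableAt ℝ f x)
    (hg : DifferentiableAt ℝ g x) (hgx : g x ≠ 0) (s : F) :
    g x • (f x • s + gradient f x) - (f x * g x) • (s - gradient (fun y => Real.log (g y)) x)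
      = gradient (fun y => f y * g y) x := by
  rw [gradient_log_comp hg hgx, gradient_fun_mul hf hg, smul_sub, smul_smul, mul_assoc,
    mul_inv_cancel₀ hgx, mul_one]
  module

end GradientCalculus

section EuclideanSpace

variable {ι : Type*} [Fintype ι] [DecidableEq ι]

theorem EuclideanSpace.gradient_apply (f : EuclideanSpace ℝ ι → ℝ) (x : EuclideanSpace ℝ ι)
    (i : ι) : gradient f x i = fderiv ℝ f x (EuclideanSpace.single i 1) := by
  rw [← inner_gradient_left, EuclideanSpace.inner_single_right]
  simp

/-- When `gradient f` is not integrable, its integral is the junk value `0`. -/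
theorem integral_gradient_eq_zero_of_integral_fderiv_single_eq_zero
    {μ : Measure (EuclideanSpace ℝ ι)} {f : EuclideanSpace ℝ ι → ℝ}
    (h : ∀ i, ∫ x, fderiv ℝ f x (EuclideanSpace.single i 1) ∂μ = 0) :
    ∫ x, gradient f x ∂μ = 0 := by
  by_cases hint : Integrable (gradient f) μ
  · ext i
    rw [eval_integral_piLp hint.eval_piLp]
    simpa only [EuclideanSpace.gradient_apply, PiLp.zero_apply] using h i
  · exact integral_undef hint

end EuclideanSpace

theorem stein_operator_expectation_eq_score_difference_general {d : ℕ}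
    (p q : EuclideanSpace ℝ (Fin d) → ℝ)
    (k : EuclideanSpace ℝ (Fin d) → EuclideanSpace ℝ (Fin d) → ℝ)
    (xb : EuclideanSpace ℝ (Fin d))
    (hq_diff : Differentiable ℝ q) (hq_pos : ∀ x, 0 < q x)
    (hk_diff : Differentiable ℝ (fun x => k x xb))
    (hk_stein : ∀ i : Fin d,
      ∫ x, fderiv ℝ (fun y => k y xb * q y) x (EuclideanSpace.single i 1) = 0)
    (h_int1 : Integrable
      (fun x => q x • (k x xb • gradient (fun y => Real.log (p y)) x
        + gradient (fun y => k y xb) x))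
      (volume : Measure (EuclideanSpace ℝ (Fin d))))
    (h_int2 : Integrable
      (fun x => (k x xb * q x) •
        (gradient (fun y => Real.log (p y)) x - gradient (fun y => Real.log (q y)) x))
      (volume : Measure (EuclideanSpace ℝ (Fin d)))) :
    ∫ x, q x • (k x xb • gradient (fun y => Real.log (p y)) x
        + gradient (fun y => k y xb) x)
      = ∫ x, (k x xb * q x) •
          (gradient (fun y => Real.log (p y)) x - gradient (fun y => Real.log (q y)) x) := by
  rw [← sub_eq_zero, ← integral_sub h_int1 h_int2]
  simp_rw [gradient_mul_eq_smul_stein_sub_smul_score_sub (hk_diff _) (hq_diff _)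
    (hq_pos _).ne']
  exact integral_gradient_eq_zero_of_integral_fderiv_single_eq_zero hk_stein

/-- If `p, q` are differentiable positive probability densities on `ℝᵈ` and, for the
fixed point `x̄`, the kernel section `x ↦ k x x̄` is differentiable and in the Stein
class of `q`, then (assuming the integrands are integrable)
`E_{x∼q}[A_p k(x, x̄)] = ∫ ((∇ log p) x • k x x̄ + ∇ₓ k x x̄) q x dx
                      = ∫ ((∇ log p) x − (∇ log q) x) k x x̄ q x dx`. -/
theorem stein_operator_expectation_eq_score_difference {d : ℕ}
    (p q : EuclideanSpace ℝ (Fin d) → ℝ)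
    (k : EuclideanSpace ℝ (Fin d) → EuclideanSpace ℝ (Fin d) → ℝ)
    (xb : EuclideanSpace ℝ (Fin d))
    (hp_diff : Differentiable ℝ p) (hp_pos : ∀ x, 0 < p x)
    (hp_int : Integrable p (volume : Measure (EuclideanSpace ℝ (Fin d))))
    (hp_one : ∫ x, p x = 1)
    (hq_diff : Differentiable ℝ q) (hq_pos : ∀ x, 0 < q x)
    (hq_int : Integrable q (volume : Measure (EuclideanSpace ℝ (Fin d))))
    (hq_one : ∫ x, q x = 1)
    (hk_diff : Differentiable ℝ (fun x => k x xb))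
    (hk_int : ∀ i : Fin d,
      Integrable (fun x => fderiv ℝ (fun y => k y xb * q y) x (EuclideanSpace.single i 1))
        (volume : Measure (EuclideanSpace ℝ (Fin d))))
    (hk_stein : ∀ i : Fin d,
      ∫ x, fderiv ℝ (fun y => k y xb * q y) x (EuclideanSpace.single i 1) = 0)
    (h_int1 : Integrable
      (fun x => q x • (k x xb • gradient (fun y => Real.log (p y)) x
        + gradient (fun y => k y xb) x))
      (volume : Measure (EuclideanSpace ℝ (Fin d))))
    (h_int2 : Integrable
      (fun x => (k x xb * q x) •
        (gradient (fun y => Real.log (p y)) x - gradient (fun y => Real.log (q y)) x))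
      (volume : Measure (EuclideanSpace ℝ (Fin d)))) :
    ∫ x, q x • (k x xb • gradient (fun y => Real.log (p y)) x
        + gradient (fun y => k y xb) x)
      = ∫ x, (k x xb * q x) •
          (gradient (fun y => Real.log (p y)) x - gradient (fun y => Real.log (q y)) x) :=
  stein_operator_expectation_eq_score_difference_general p q k xb hq_diff hq_pos hk_diff hk_stein
    h_int1 h_int2
end

section
/- Let p, q : ℝᵈ → ℝ be differentiable probability densities with p(x) > 0 and q(x) > 0 for all x, with p and q continuous. Let k : ℝᵈ × ℝᵈ → ℝ be a symmetric kernel admitting a pointwise absolutely convergent expansion k(x, x') = ∑_j λ_j e_j(x) e_j(x') where λ_j > 0 for all j and (e_j)_{j∈ℕ} is an orthonormal Hilbert basis of L²(ℝᵈ) consisting of continuous functions. Assume: (i) for every x̄, the function x ↦ k(x, x̄) is differentiable, in the Stein class of both p and q (i.e. ∫ ∇_x(k(x, x̄)p(x)) dx = 0 and ∫ ∇_x(k(x, x̄)q(x)) dx = 0), (ii) the function g(x̄) := ∫_{ℝᵈ} ((∇ log p)(x) − (∇ log q)(x)) k(x, x̄) q(x) dx is well-defined (integrand integrable) and continuous in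 x̄, with term-by-term integration valid: g(x̄) = ∑_j λ_j e_j(x̄) B_j in L²(ℝᵈ), where B_j := ∫ ((∇ log p)(x) − (∇ log q)(x)) e_j(x) q(x) dx, (iii) each component of x ↦ ((∇ log p)(x) − (∇ log q)(x)) q(x) lies in L²(ℝᵈ), and (iv) ‖g‖² p is integrable with D(q‖p) := ∫_{ℝᵈ} ‖g(x̄)‖² p(x̄) dx̄ = 0. Then p = q. -/
/-!
Since `p > 0` and `g` is continuous, `D(q‖p) = 0` forces `g = 0`. Pairing the `L²` expansion
`g = ∑ λ_j B_j e_j` with `e_j` gives `λ_j B_j = 0`, so `B_j = 0` because `λ_j > 0`. But `B_j` is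
the `L²` pairing of `e_j` with `q (∇ log p − ∇ log q)`, so completeness of `(e_j)` makes
`∇ (log p − log q)` vanish almost everywhere. A differentiable function whose derivative vanishes
almost everywhere is constant (Fubini along the lines `t ↦ x + t v`, then the fundamental theorem
of calculus and continuity), hence `p = c q`, and `c = 1` since both integrate to `1`.
-/

open MeasureTheory

section ConstantOfFDerivAEZero

variable {E F : Type*} [NormedAddCommGroup E] [NormedSpace ℝ E] [MeasurableSpace E] [BorelSpace E]
  [SecondCountableTopology E] [NormedAddCommGroup F] [NormedSpace ℝ F] [CompleteSpace F]

lemma eq_of_hasDerivAt_of_ae_eq_zero {f f' : ℝ → F} (hf : ∀ t, HasDerivAt f (f' t) t)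
    (h : f' =ᵐ[volume] 0) (a b : ℝ) : f a = f b := by
  have hint : IntervalIntegrable f' volume a b :=
    ((integrable_zero ℝ F volume).congr h.symm).intervalIntegrable
  have hftc := intervalIntegral.integral_eq_sub_of_hasDerivAt (fun t _ => hf t) hint
  rw [intervalIntegral.integral_congr_ae (h.mono fun t ht _ => ht)] at hftc
  simp only [Pi.zero_apply, intervalIntegral.integral_zero] at hftc
  exact (sub_eq_zero.mp hftc.symm).symm

lemma quasiMeasurePreserving_add_smul (μ : Measure E) [SFinite μ] [μ.IsAddRightInvariant]
    (v : E) :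
    Measure.QuasiMeasurePreserving (fun z : E × ℝ => z.1 + z.2 • v) (μ.prod volume) μ := by
  have hmeas : Measurable fun z : E × ℝ => z.1 + z.2 • v := by fun_prop
  refine ⟨hmeas, Measure.AbsolutelyContinuous.mk fun s hs hμs => ?_⟩
  rw [Measure.map_apply hmeas hs, Measure.prod_apply_symm (hmeas hs)]
  have hline (t : ℝ) :
      μ ((fun x => (x, t)) ⁻¹' ((fun z : E × ℝ => z.1 + z.2 • v) ⁻¹' s)) = 0 :=
    (measure_preimage_add_right μ (t • v) s).trans hμs
  simp only [hline, lintegral_zero]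

lemma ae_ae_add_smul_of_ae {μ : Measure E} [SFinite μ] [μ.IsAddRightInvariant] (v : E)
    {P : E → Prop} (h : ∀ᵐ y ∂μ, P y) : ∀ᵐ x ∂μ, ∀ᵐ t : ℝ, P (x + t • v) :=
  Measure.ae_ae_of_ae_prod ((quasiMeasurePreserving_add_smul μ v).ae h)

lemma eq_of_fderiv_ae_eq_zero (μ : Measure E) [SFinite μ] [μ.IsAddRightInvariant]
    [μ.IsOpenPosMeasure] {f : E → F} (hf : Differentiable ℝ f)
    (h : ∀ᵐ x ∂μ, fderiv ℝ f x = 0) (x y : E) : f x = f y := by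
  have hcont := hf.continuous
  have htrans (v : E) : (fun x => f (x + v)) = f := by
    refine (hcont.comp (continuous_add_const v)).ae_eq_iff_eq μ hcont |>.mp ?_
    filter_upwards [ae_ae_add_smul_of_ae v h] with x hx
    have hline (t : ℝ) :
        HasDerivAt (fun t : ℝ => f (x + t • v)) (fderiv ℝ f (x + t • v) v) t :=
      (hf _).hasFDerivAt.comp_hasDerivAt t
        (by simpa using ((hasDerivAt_id t).smul_const v).const_add x)
    simpa using eq_of_hasDerivAt_of_ae_eq_zero hline (hx.mono fun t ht => by simp [ht]) 1 0
  simpa using congrFun (htrans (x - y)) y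

end ConstantOfFDerivAEZero

lemma eq_zero_of_integral_norm_sq_mul_eq_zero {α E : Type*} [TopologicalSpace α]
    [MeasurableSpace α] [OpensMeasurableSpace α] {μ : Measure α} [μ.IsOpenPosMeasure]
    [NormedAddCommGroup E] {g : α → E} {w : α → ℝ} (hg : Continuous g) (hw : Continuous w)
    (hw_pos : ∀ x, 0 < w x) (hint : Integrable (fun x => ‖g x‖ ^ 2 * w x) μ)
    (h : ∫ x, ‖g x‖ ^ 2 * w x ∂μ = 0) : g = 0 := by
  have hnonneg : 0 ≤ fun x => ‖g x‖ ^ 2 * w x := fun x => mul_nonneg (sq_nonneg _) (hw_pos x).le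
  have hzero : (fun x => ‖g x‖ ^ 2 * w x) = 0 :=
    ((hg.norm.pow 2).mul hw).ae_eq_iff_eq μ continuous_const |>.mp
      ((integral_eq_zero_iff_of_nonneg hnonneg hint).mp h)
  funext x
  simpa [(hw_pos x).ne'] using congrFun hzero x

lemma Orthonormal.inner_eq_of_hasSum {𝕜 E ι : Type*} [RCLike 𝕜] [NormedAddCommGroup E]
    [InnerProductSpace 𝕜 E] {v : ι → E} (hv : Orthonormal 𝕜 v) {c : ι → 𝕜} {x : E}
    (h : HasSum (fun i => c i • v i) x) (j : ι) : inner 𝕜 (v j) x = c j := by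
  classical
  have hmap := h.mapL (innerSL 𝕜 (v j))
  simp only [innerSL_apply_apply, inner_smul_right, orthonormal_iff_ite.mp hv, mul_ite,
    mul_one, mul_zero] at hmap
  simpa using hmap.unique (hasSum_single j fun i hi => by simp [Ne.symm hi])

lemma integral_mul_smul_apply_eq_inner {α ι : Type*} [MeasurableSpace α] {μ : Measure α}
    [Fintype ι] {φ ψ : α → ℝ} {F : α → EuclideanSpace ℝ ι} (hφ : MemLp φ 2 μ)
    (hF : ∀ i, MemLp (fun x => ψ x * F x i) 2 μ) (i : ι) :
    (∫ x, (φ x * ψ x) • F x ∂μ) i = inner ℝ (hφ.toLp φ) ((hF i).toLp _) := by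
  have hint (i : ι) : Integrable (fun x => φ x * (ψ x * F x i)) μ := hφ.integrable_mul (hF i)
  rw [eval_integral_piLp (fun i => by simpa [mul_assoc] using hint i), L2.inner_def]
  refine integral_congr_ae ?_
  filter_upwards [hφ.coeFn_toLp, (hF i).coeFn_toLp] with x hxφ hxF
  simp [hxφ, hxF, mul_assoc, mul_comm]

section Gradient

variable {𝕜 E : Type*} [RCLike 𝕜] [NormedAddCommGroup E] [InnerProductSpace 𝕜 E]
  [CompleteSpace E] {f g : E → 𝕜} {x : E}

lemma gradient_eq_zero_iff : gradient f x = 0 ↔ fderiv 𝕜 f x = 0 := by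
  simp [gradient]

lemma gradient_sub (hf : DifferentiableAt 𝕜 f x) (hg : DifferentiableAt 𝕜 g x) :
    gradient (fun y => f y - g y) x = gradient f x - gradient g x := by
  simp only [gradient, fderiv_fun_sub hf hg, map_sub]

end Gradient

lemma eq_of_eq_const_mul_of_integral_eq_one {α : Type*} [MeasurableSpace α] {μ : Measure α}
    {p q : α → ℝ} {c : ℝ} (h : ∀ x, p x = c * q x) (hp : ∫ x, p x ∂μ = 1)
    (hq : ∫ x, q x ∂μ = 1) (x : α) : p x = q x := by
  have hc : c = 1 := by
    simpa [h, integral_const_mul, hq] using hp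
  rw [h, hc, one_mul]

theorem eq_of_stein_discrepancy_eq_zero_general {d : ℕ}
    (p q : EuclideanSpace ℝ (Fin d) → ℝ)
    (hp_diff : Differentiable ℝ p) (hp_cont : Continuous p) (hp_pos : ∀ x, 0 < p x)
    (hp_one : ∫ x, p x = 1)
    (hq_diff : Differentiable ℝ q) (hq_pos : ∀ x, 0 < q x)
    (hq_one : ∫ x, q x = 1)
    -- Mercer-type expansion: positive eigenvalues, continuous orthonormal Hilbert basis
    (lam : ℕ → ℝ) (hlam : ∀ j, 0 < lam j)
    (e : ℕ → EuclideanSpace ℝ (Fin d) → ℝ)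
    (he_mem : ∀ j, MemLp (e j) 2 (volume : Measure (EuclideanSpace ℝ (Fin d))))
    (he_on : Orthonormal ℝ (fun j => (he_mem j).toLp (e j)))
    (he_complete : ∀ f : Lp ℝ 2 (volume : Measure (EuclideanSpace ℝ (Fin d))),
      (∀ j, inner ℝ ((he_mem j).toLp (e j)) f = (0 : ℝ)) → f = 0)
    -- (ii) the function `g` and the coefficients `B`
    (g : EuclideanSpace ℝ (Fin d) → EuclideanSpace ℝ (Fin d))
    (B : ℕ → EuclideanSpace ℝ (Fin d))
    (hg_cont : Continuous g)
    (hB_def : ∀ j, B j = ∫ x, (e j x * q x) •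
      (gradient (fun y => Real.log (p y)) x - gradient (fun y => Real.log (q y)) x))
    (hg_mem : ∀ i : Fin d,
      MemLp (fun xb => g xb i) 2 (volume : Measure (EuclideanSpace ℝ (Fin d))))
    -- term-by-term integration: `g = ∑ j, (λ j * B j) • e j` in `L²`, componentwise
    (hg_sum : ∀ i : Fin d,
      HasSum (fun j => (lam j * B j i) • (he_mem j).toLp (e j)) ((hg_mem i).toLp _))
    -- (iii) each component of `(∇ log p − ∇ log q) * q` is square integrable
    (h_score_mem : ∀ i : Fin d,
      MemLp (fun x => q x *
          (gradient (fun y => Real.log (p y)) x - gradient (fun y => Real.log (q y)) x) i)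
        2 (volume : Measure (EuclideanSpace ℝ (Fin d))))
    -- (iv) the Stein discrepancy vanishes
    (hD_int : Integrable (fun xb => ‖g xb‖ ^ 2 * p xb)
      (volume : Measure (EuclideanSpace ℝ (Fin d))))
    (hD_zero : ∫ xb, ‖g xb‖ ^ 2 * p xb = 0) :
    ∀ x, p x = q x := by
  have hlog_p : Differentiable ℝ fun y => Real.log (p y) := hp_diff.log fun x => (hp_pos x).ne'
  have hlog_q : Differentiable ℝ fun y => Real.log (q y) := hq_diff.log fun x => (hq_pos x).ne'
  set G := fun y => Real.log (p y) - Real.log (q y) with hG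
  simp only [← gradient_sub (hlog_p _) (hlog_q _)] at hB_def h_score_mem
  have hg : g = 0 := eq_zero_of_integral_norm_sq_mul_eq_zero hg_cont hp_cont hp_pos hD_int hD_zero
  have hB (j : ℕ) : B j = 0 := by
    ext i
    have hg_i : (hg_mem i).toLp _ = 0 := by
      rw [(hg_mem i).toLp_congr MemLp.zero (ae_of_all _ fun x => by simp [hg]), MemLp.toLp_zero]
    have hcoeff := he_on.inner_eq_of_hasSum (hg_sum i) j
    rw [hg_i, inner_zero_right, zero_eq_mul] at hcoeff
    simpa [(hlam j).ne'] using hcoeff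
  have hscore (i : Fin d) : (fun x => q x * gradient G x i) =ᵐ[volume] 0 := by
    have hscore_i : (h_score_mem i).toLp _ = 0 := he_complete _ fun j => by
      rw [← integral_mul_smul_apply_eq_inner (he_mem j) h_score_mem i, ← hB_def, hB]
      rfl
    exact ((h_score_mem i).toLp_eq_toLp_iff MemLp.zero).mp
      (hscore_i.trans (MemLp.toLp_zero _).symm)
  have hG_deriv : ∀ᵐ x, fderiv ℝ G x = 0 := by
    filter_upwards [ae_all_iff.mpr hscore] with x hx
    rw [← gradient_eq_zero_iff]
    ext i
    simpa [(hq_pos x).ne'] using hx i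
  have hG_const (x) : G x = G 0 :=
    eq_of_fderiv_ae_eq_zero volume (hlog_p.fun_sub hlog_q) hG_deriv x 0
  refine eq_of_eq_const_mul_of_integral_eq_one (c := Real.exp (G 0)) (fun x => ?_) hp_one hq_one
  rw [← hG_const, hG, Real.exp_sub, Real.exp_log (hp_pos x), Real.exp_log (hq_pos x),
    div_mul_cancel₀ _ (hq_pos x).ne']

/-- **Proposition 2 (reverse direction).** Let `p, q` be continuous, differentiable,
everywhere positive probability densities on `ℝᵈ`, and let `k` be a symmetric kernel
with a pointwise (absolutely, i.e. unconditionally) convergent Mercer expansion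
`k x x' = ∑ j, λ j * e j x * e j x'` with `λ j > 0` and `(e j)` a continuous
orthonormal Hilbert basis of `L²(ℝᵈ)`.  Assume each kernel section `x ↦ k x x̄` is
differentiable and in the Stein class of both `p` and `q`; that
`g x̄ = ∫ ((∇ log p) x − (∇ log q) x) k x x̄ q x dx` is well defined, continuous, and
admits the term-by-term `L²` expansion `g = ∑ j, (λ j * B j) • e j` componentwise,
where `B j = ∫ ((∇ log p) x − (∇ log q) x) e j x q x dx`; that each component of
`(∇ log p − ∇ log q) * q` lies in `L²`; and that the Stein discrepancy
`D(q‖p) = ∫ ‖g x̄‖² p x̄ dx̄` vanishes (integrand integrable).  Then `p = q`. -/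
theorem eq_of_stein_discrepancy_eq_zero {d : ℕ}
    (p q : EuclideanSpace ℝ (Fin d) → ℝ)
    (k : EuclideanSpace ℝ (Fin d) → EuclideanSpace ℝ (Fin d) → ℝ)
    (hp_diff : Differentiable ℝ p) (hp_cont : Continuous p) (hp_pos : ∀ x, 0 < p x)
    (hp_int : Integrable p (volume : Measure (EuclideanSpace ℝ (Fin d))))
    (hp_one : ∫ x, p x = 1)
    (hq_diff : Differentiable ℝ q) (hq_cont : Continuous q) (hq_pos : ∀ x, 0 < q x)
    (hq_int : Integrable q (volume : Measure (EuclideanSpace ℝ (Fin d))))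
    (hq_one : ∫ x, q x = 1)
    -- the kernel is symmetric
    (hk_symm : ∀ x x', k x x' = k x' x)
    -- Mercer-type expansion: positive eigenvalues, continuous orthonormal Hilbert basis
    (lam : ℕ → ℝ) (hlam : ∀ j, 0 < lam j)
    (e : ℕ → EuclideanSpace ℝ (Fin d) → ℝ)
    (he_cont : ∀ j, Continuous (e j))
    (he_mem : ∀ j, MemLp (e j) 2 (volume : Measure (EuclideanSpace ℝ (Fin d))))
    (he_on : Orthonormal ℝ (fun j => (he_mem j).toLp (e j)))
    (he_complete : ∀ f : Lp ℝ 2 (volume : Measure (EuclideanSpace ℝ (Fin d))),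
      (∀ j, inner ℝ ((he_mem j).toLp (e j)) f = (0 : ℝ)) → f = 0)
    -- pointwise absolutely convergent expansion of the kernel
    (hk_mercer : ∀ x x', HasSum (fun j => lam j * (e j x * e j x')) (k x x'))
    -- (i) each kernel section is differentiable and in the Stein class of `p` and of `q`
    (hk_diff : ∀ xb, Differentiable ℝ (fun x => k x xb))
    (hk_int_p : ∀ xb, ∀ i : Fin d,
      Integrable (fun x => fderiv ℝ (fun y => k y xb * p y) x (EuclideanSpace.single i 1))
        (volume : Measure (EuclideanSpace ℝ (Fin d))))
    (hk_stein_p : ∀ xb, ∀ i : Fin d,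
      ∫ x, fderiv ℝ (fun y => k y xb * p y) x (EuclideanSpace.single i 1) = 0)
    (hk_int_q : ∀ xb, ∀ i : Fin d,
      Integrable (fun x => fderiv ℝ (fun y => k y xb * q y) x (EuclideanSpace.single i 1))
        (volume : Measure (EuclideanSpace ℝ (Fin d))))
    (hk_stein_q : ∀ xb, ∀ i : Fin d,
      ∫ x, fderiv ℝ (fun y => k y xb * q y) x (EuclideanSpace.single i 1) = 0)
    -- (ii) the function `g` and the coefficients `B`
    (g : EuclideanSpace ℝ (Fin d) → EuclideanSpace ℝ (Fin d))
    (B : ℕ → EuclideanSpace ℝ (Fin d))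
    (hg_int : ∀ xb, Integrable
      (fun x => (k x xb * q x) •
        (gradient (fun y => Real.log (p y)) x - gradient (fun y => Real.log (q y)) x))
      (volume : Measure (EuclideanSpace ℝ (Fin d))))
    (hg_def : ∀ xb, g xb = ∫ x, (k x xb * q x) •
      (gradient (fun y => Real.log (p y)) x - gradient (fun y => Real.log (q y)) x))
    (hg_cont : Continuous g)
    (hB_def : ∀ j, B j = ∫ x, (e j x * q x) •
      (gradient (fun y => Real.log (p y)) x - gradient (fun y => Real.log (q y)) x))
    (hg_mem : ∀ i : Fin d,
      MemLp (fun xb => g xb i) 2 (volume : Measure (EuclideanSpace ℝ (Fin d))))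
    -- term-by-term integration: `g = ∑ j, (λ j * B j) • e j` in `L²`, componentwise
    (hg_sum : ∀ i : Fin d,
      HasSum (fun j => (lam j * B j i) • (he_mem j).toLp (e j)) ((hg_mem i).toLp _))
    -- (iii) each component of `(∇ log p − ∇ log q) * q` is square integrable
    (h_score_mem : ∀ i : Fin d,
      MemLp (fun x => q x *
          (gradient (fun y => Real.log (p y)) x - gradient (fun y => Real.log (q y)) x) i)
        2 (volume : Measure (EuclideanSpace ℝ (Fin d))))
    -- (iv) the Stein discrepancy vanishes
    (hD_int : Integrable (fun xb => ‖g xb‖ ^ 2 * p xb)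
      (volume : Measure (EuclideanSpace ℝ (Fin d))))
    (hD_zero : ∫ xb, ‖g xb‖ ^ 2 * p xb = 0) :
    ∀ x, p x = q x :=
  eq_of_stein_discrepancy_eq_zero_general p q hp_diff hp_cont hp_pos hp_one hq_diff hq_pos hq_one
    lam hlam e he_mem he_on he_complete g B hg_cont hB_def hg_mem hg_sum h_score_mem hD_int hD_zero
end
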